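/- Let A be a type and let α, β, γ, δ be setoids on A forming a pentagon N5. Form the duplication A(γ) over γ. Then in Setoid (A(γ)) one has γ₀ = γ₁ = η₀ ⊔ η₁, α₀ = α₁, δ₀ = δ₁ = β₀ ⊔ γ₀ = β₀ ⊔ β₁, β₀ = η₀ ⊔ (β₀ ⊓ β₁), β₁ = η₁ ⊔ (β₀ ⊓ β₁), β₀ ⊓ γ₀ = η₀, β₁ ⊓ γ₀ = η₁, α₀ ⊓ β₀ = η₀, (β₀ ⊓ β₁) ⊓ η₀ = ⊥, (β₀ ⊓ β₁) ⊔ γ₀ = δ₀, and the nine setoids ⊥, η₀, η₁, β₀ ⊓ β₁, β₀, β₁, γ₀, α₀, δ₀ are pairwise distinct and form a set closed under ⊓ and ⊔ (a sublattice isomorphic to the lattice L₁₄ of the paper's Figure 3). -/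

import Mathlib

/-! Common setup: the lattice `Setoid A` of equivalence relations on `A`,
the duplication `Dup β = {p : A × A // β p.1 p.2}`, the lifted setoids
`lift0 β θ = θ₀`, `lift1 β θ = θ₁`, the projection kernels `ker0 β = η₀`,
`ker1 β = η₁`, and relational composition `rc`. -/

variable {A : Type*}

/-- The duplication `A(β)`. -/
def Dup (β : Setoid A) : Type _ := {p : A × A // β p.1 p.2}

/-- `θ₀`: relate two elements of `A(β)` iff `θ` relates their first coordinates. -/
def lift0 (β θ : Setoid A) : Setoid (Dup β) :=
  ⟨fun x y => θ x.1.1 y.1.1,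
   ⟨fun _ => θ.refl' _, fun h => θ.symm' h, fun h h' => θ.trans' h h'⟩⟩

/-- `θ₁`: relate two elements of `A(β)` iff `θ` relates their second coordinates. -/
def lift1 (β θ : Setoid A) : Setoid (Dup β) :=
  ⟨fun x y => θ x.1.2 y.1.2,
   ⟨fun _ => θ.refl' _, fun h => θ.symm' h, fun h h' => θ.trans' h h'⟩⟩

/-- `η₀`: kernel of the first projection. -/
def ker0 (β : Setoid A) : Setoid (Dup β) :=
  ⟨fun x y => x.1.1 = y.1.1, ⟨fun _ => rfl, Eq.symm, Eq.trans⟩⟩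

/-- `η₁`: kernel of the second projection. -/
def ker1 (β : Setoid A) : Setoid (Dup β) :=
  ⟨fun x y => x.1.2 = y.1.2, ⟨fun _ => rfl, Eq.symm, Eq.trans⟩⟩

/-- Relational composition. -/
def rc {B : Type*} (r s : B → B → Prop) : B → B → Prop :=
  fun a b => ∃ c, r a c ∧ s c b

/-- `α, β, γ, δ` form a pentagon `N₅` in `Setoid A`. -/
def IsN5 (α β γ δ : Setoid A) : Prop :=
  ⊥ < γ ∧ γ < α ∧ α < δ ∧ α ⊓ β = ⊥ ∧ γ ⊔ β = δ ∧ α ⊔ β = δ ∧ β ≠ ⊥ ∧ β ≠ δ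

/-!
In `A(γ)` the setoids `η₀`, `η₁` and `μ = β₀ ⊓ β₁` are atoms meeting pairwise in `⊥`: two points
of `A(γ)` with equal first coordinates have `γ`-related second coordinates, and `β ⊓ γ = ⊥`.
Joining through `(x₀, y₁)` gives `γ₀ = η₀ ⊔ η₁`, joining through the diagonal gives
`βᵢ = ηᵢ ⊔ μ`, and `δ = β ⊔ γ` then gives `δ₀ = η₀ ⊔ η₁ ⊔ μ`; so apart from `α₀`, which lies
between `γ₀` and `δ₀` and meets `β₀`, `β₁` in `η₀`, `η₁` because `α ⊓ β = ⊥`, the nine setoids are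
the joins of sets of atoms. This computes every meet and join of two of them. They are pairwise
distinct because the pairs `((a,b),(a,a))`, `((b,a),(a,a))`, `((u,u),(v,v))`, `((c,c),(d,d))`,
for `a γ b`, `u β v` and `c α d` with `a ≠ b`, `u ≠ v` and `¬ c γ d`, already tell them apart.
-/

theorem List.forall_inf_sup_mem_of_pairwise {L : Type*} [Lattice L] {l : List L}
    (hinf : l.Pairwise fun x y => x ≤ y ∨ x ⊓ y ∈ l)
    (hsup : l.Pairwise fun x y => x ≤ y ∨ x ⊔ y ∈ l) :
    ∀ x ∈ l, ∀ y ∈ l, x ⊓ y ∈ l ∧ x ⊔ y ∈ l := by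
  have hR : l.Pairwise fun x y => x ⊓ y ∈ l ∧ x ⊔ y ∈ l :=
    (hinf.and hsup).imp_of_mem fun {x y} hx hy ⟨hi, hs⟩ => by
      by_cases hle : x ≤ y
      · exact ⟨(inf_of_le_left hle).symm ▸ hx, (sup_of_le_right hle).symm ▸ hy⟩
      · exact ⟨hi.resolve_left hle, hs.resolve_left hle⟩
  refine fun x hx y hy => hR.forall_of_forall_of_flip (fun z hz => ?_) (hR.imp ?_) hx hy
  · simpa only [inf_idem, sup_idem, and_self] using hz
  · intro x y h
    simpa only [flip, inf_comm, sup_comm] using h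

theorem Setoid.exists_rel_not_rel_of_not_le {B : Type*} {r s : Setoid B} (h : ¬ r ≤ s) :
    ∃ a b, r a b ∧ ¬ s a b := by
  simpa [Setoid.le_def] using h

namespace Dup

variable {γ : Setoid A}

def mk {a b : A} (h : γ a b) : Dup γ := ⟨(a, b), h⟩

def diag (γ : Setoid A) (c : A) : Dup γ := mk (γ.refl' c)

@[simp] theorem mk_val {a b : A} (h : γ a b) : (mk h).1 = (a, b) := rfl

@[simp] theorem diag_val (c : A) : (diag γ c).1 = (c, c) := rfl

theorem ext_iff {x y : Dup γ} : x = y ↔ x.1.1 = y.1.1 ∧ x.1.2 = y.1.2 :=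
  Subtype.ext_iff.trans Prod.ext_iff

theorem ext {x y : Dup γ} (h0 : x.1.1 = y.1.1) (h1 : x.1.2 = y.1.2) : x = y :=
  ext_iff.mpr ⟨h0, h1⟩

end Dup

section Duplication

variable (γ : Setoid A)

@[simp] theorem lift0_apply {θ : Setoid A} {x y : Dup γ} : lift0 γ θ x y ↔ θ x.1.1 y.1.1 :=
  Iff.rfl

@[simp] theorem lift1_apply {θ : Setoid A} {x y : Dup γ} : lift1 γ θ x y ↔ θ x.1.2 y.1.2 :=
  Iff.rfl

@[simp] theorem ker0_apply {x y : Dup γ} : ker0 γ x y ↔ x.1.1 = y.1.1 := Iff.rfl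

@[simp] theorem ker1_apply {x y : Dup γ} : ker1 γ x y ↔ x.1.2 = y.1.2 := Iff.rfl

theorem lift0_mono : Monotone (lift0 γ) := fun _ _ h _ _ hxy => h hxy

theorem lift1_mono : Monotone (lift1 γ) := fun _ _ h _ _ hxy => h hxy

theorem lift0_le_lift0_iff {r s : Setoid A} : lift0 γ r ≤ lift0 γ s ↔ r ≤ s :=
  ⟨fun h a b hab => h (x := Dup.diag γ a) (y := Dup.diag γ b) hab, fun h => lift0_mono γ h⟩

theorem ker0_le_lift0 (θ : Setoid A) : ker0 γ ≤ lift0 γ θ := fun x y (h : x.1.1 = y.1.1) =>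
  show θ x.1.1 y.1.1 from h ▸ θ.refl' x.1.1

theorem ker1_le_lift1 (θ : Setoid A) : ker1 γ ≤ lift1 γ θ := fun x y (h : x.1.2 = y.1.2) =>
  show θ x.1.2 y.1.2 from h ▸ θ.refl' x.1.2

theorem lift0_bot : lift0 γ ⊥ = ker0 γ := rfl

theorem lift1_bot : lift1 γ ⊥ = ker1 γ := rfl

theorem lift0_inf (r s : Setoid A) : lift0 γ (r ⊓ s) = lift0 γ r ⊓ lift0 γ s := rfl

theorem lift1_inf (r s : Setoid A) : lift1 γ (r ⊓ s) = lift1 γ r ⊓ lift1 γ s := rfl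

theorem lift0_eq_lift1 {θ : Setoid A} (h : γ ≤ θ) : lift0 γ θ = lift1 γ θ := by
  ext x y
  exact ⟨fun hxy => θ.trans' (θ.symm' (h x.2)) (θ.trans' hxy (h y.2)),
    fun hxy => θ.trans' (h x.2) (θ.trans' hxy (θ.symm' (h y.2)))⟩

theorem ker1_le_lift0 {θ : Setoid A} (h : γ ≤ θ) : ker1 γ ≤ lift0 γ θ :=
  lift0_eq_lift1 γ h ▸ ker1_le_lift1 γ θ

-- `x` and `y` are joined through the point `(x₀, y₁)`, which lies in `A(γ)` because `x₀ γ y₀ γ y₁`.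
theorem lift0_self : lift0 γ γ = ker0 γ ⊔ ker1 γ := by
  refine le_antisymm (fun x y hxy => ?_) (sup_le (ker0_le_lift0 γ γ) (ker1_le_lift0 γ le_rfl))
  let z : Dup γ := ⟨(x.1.1, y.1.2), γ.trans' hxy y.2⟩
  have hxz : ker0 γ x z := rfl
  have hzy : ker1 γ z y := rfl
  exact Setoid.trans' _ (le_sup_left (b := ker1 γ) hxz) (le_sup_right (a := ker0 γ) hzy)

theorem lift0_sup (r s : Setoid A) : lift0 γ (r ⊔ s) = lift0 γ r ⊔ lift0 γ s := by
  refine le_antisymm (fun x y hxy => ?_) (sup_le (lift0_mono γ le_sup_left)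
    (lift0_mono γ le_sup_right))
  have hcomap : r ⊔ s ≤ (lift0 γ r ⊔ lift0 γ s).comap (Dup.diag γ) :=
    sup_le (fun a b h => le_sup_left (b := lift0 γ s) h)
      (fun a b h => le_sup_right (a := lift0 γ r) h)
  have hx : (lift0 γ r ⊔ lift0 γ s) x (Dup.diag γ x.1.1) :=
    le_sup_left (b := lift0 γ s) (ker0_le_lift0 γ r rfl)
  have hy : (lift0 γ r ⊔ lift0 γ s) (Dup.diag γ y.1.1) y :=
    le_sup_left (b := lift0 γ s) (ker0_le_lift0 γ r rfl)
  exact Setoid.trans' _ hx (Setoid.trans' _ (hcomap hxy) hy)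

theorem ker0_sup_lift0_inf_lift1 (θ : Setoid A) :
    ker0 γ ⊔ (lift0 γ θ ⊓ lift1 γ θ) = lift0 γ θ := by
  refine le_antisymm (sup_le (ker0_le_lift0 γ θ) inf_le_left) (fun x y hxy => ?_)
  have hdiag : (lift0 γ θ ⊓ lift1 γ θ) (Dup.diag γ x.1.1) (Dup.diag γ y.1.1) := ⟨hxy, hxy⟩
  have hx : ker0 γ x (Dup.diag γ x.1.1) := rfl
  have hy : ker0 γ (Dup.diag γ y.1.1) y := rfl
  exact Setoid.trans' _ (le_sup_left (b := lift0 γ θ ⊓ lift1 γ θ) hx) <|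
    Setoid.trans' _ (le_sup_right (a := ker0 γ) hdiag) (le_sup_left (b := lift0 γ θ ⊓ lift1 γ θ) hy)

theorem ker1_sup_lift0_inf_lift1 (θ : Setoid A) :
    ker1 γ ⊔ (lift0 γ θ ⊓ lift1 γ θ) = lift1 γ θ := by
  refine le_antisymm (sup_le (ker1_le_lift1 γ θ) inf_le_right) (fun x y hxy => ?_)
  have hdiag : (lift0 γ θ ⊓ lift1 γ θ) (Dup.diag γ x.1.2) (Dup.diag γ y.1.2) := ⟨hxy, hxy⟩
  have hx : ker1 γ x (Dup.diag γ x.1.2) := rfl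
  have hy : ker1 γ (Dup.diag γ y.1.2) y := rfl
  exact Setoid.trans' _ (le_sup_left (b := lift0 γ θ ⊓ lift1 γ θ) hx) <|
    Setoid.trans' _ (le_sup_right (a := ker1 γ) hdiag) (le_sup_left (b := lift0 γ θ ⊓ lift1 γ θ) hy)

-- If `x₀ = y₀` then `x₁ γ x₀ = y₀ γ y₁`, so a relation disjoint from `γ` forces `x₁ = y₁`.
theorem ker0_inf_lift1_eq_bot {θ : Setoid A} (h : Disjoint θ γ) : ker0 γ ⊓ lift1 γ θ = ⊥ := by
  refine le_bot_iff.mp fun x y ⟨(h0 : x.1.1 = y.1.1), (h1 : θ x.1.2 y.1.2)⟩ => Dup.ext h0 ?_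
  have hγ : γ x.1.2 y.1.2 := γ.trans' (γ.symm' x.2) (h0 ▸ y.2)
  exact (disjoint_iff.mp h).le ⟨h1, hγ⟩

theorem ker1_inf_lift0_eq_bot {θ : Setoid A} (h : Disjoint θ γ) : ker1 γ ⊓ lift0 γ θ = ⊥ := by
  refine le_bot_iff.mp fun x y ⟨(h1 : x.1.2 = y.1.2), (h0 : θ x.1.1 y.1.1)⟩ => Dup.ext ?_ h1
  have hγ : γ x.1.1 y.1.1 := γ.trans' x.2 (h1 ▸ γ.symm' y.2)
  exact (disjoint_iff.mp h).le ⟨h0, hγ⟩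

theorem ker0_inf_ker1 : ker0 γ ⊓ ker1 γ = ⊥ := by
  rw [← lift1_bot]
  exact ker0_inf_lift1_eq_bot γ disjoint_bot_left

theorem ker0_inf_lift0_inf_lift1_eq_bot {θ : Setoid A} (h : Disjoint θ γ) :
    ker0 γ ⊓ (lift0 γ θ ⊓ lift1 γ θ) = ⊥ :=
  le_bot_iff.mp <| (inf_le_inf_left _ inf_le_right).trans (ker0_inf_lift1_eq_bot γ h).le

theorem ker1_inf_lift0_inf_lift1_eq_bot {θ : Setoid A} (h : Disjoint θ γ) :
    ker1 γ ⊓ (lift0 γ θ ⊓ lift1 γ θ) = ⊥ :=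
  le_bot_iff.mp <| (inf_le_inf_left _ inf_le_left).trans (ker1_inf_lift0_eq_bot γ h).le

end Duplication

-- Listed along a linear extension of the order, so comparable pairs occur as `x ≤ y`.
def l14List (α β γ δ : Setoid A) : List (Setoid (Dup γ)) :=
  [⊥, ker0 γ, ker1 γ, lift0 γ β ⊓ lift1 γ β, lift0 γ β, lift1 γ β, lift0 γ γ, lift0 γ α, lift0 γ δ]

namespace IsN5

variable {α β γ δ : Setoid A}

theorem gamma_le_alpha (h : IsN5 α β γ δ) : γ ≤ α := h.2.1.le

theorem alpha_le_delta (h : IsN5 α β γ δ) : α ≤ δ := h.2.2.1.le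

theorem gamma_le_delta (h : IsN5 α β γ δ) : γ ≤ δ := h.gamma_le_alpha.trans h.alpha_le_delta

theorem beta_le_delta (h : IsN5 α β γ δ) : β ≤ δ := h.2.2.2.2.1 ▸ le_sup_right

theorem disjoint_alpha_beta (h : IsN5 α β γ δ) : Disjoint α β := disjoint_iff.mpr h.2.2.2.1

theorem disjoint_beta_gamma (h : IsN5 α β γ δ) : Disjoint β γ :=
  h.disjoint_alpha_beta.symm.mono_right h.gamma_le_alpha

theorem eq_of_rel_alpha_of_rel_beta (h : IsN5 α β γ δ) {x y : A} (hα : α x y) (hβ : β x y) :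
    x = y :=
  (disjoint_iff.mp h.disjoint_alpha_beta).le ⟨hα, hβ⟩

theorem lift1_beta_le_lift0_delta (h : IsN5 α β γ δ) : lift1 γ β ≤ lift0 γ δ :=
  lift0_eq_lift1 γ h.gamma_le_delta ▸ lift1_mono γ h.beta_le_delta

theorem lift0_beta_inf_lift0_gamma (h : IsN5 α β γ δ) : lift0 γ β ⊓ lift0 γ γ = ker0 γ := by
  rw [← lift0_inf, disjoint_iff.mp h.disjoint_beta_gamma, lift0_bot]

theorem lift1_beta_inf_lift0_gamma (h : IsN5 α β γ δ) : lift1 γ β ⊓ lift0 γ γ = ker1 γ := by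
  rw [lift0_eq_lift1 γ le_rfl, ← lift1_inf, disjoint_iff.mp h.disjoint_beta_gamma, lift1_bot]

theorem lift0_beta_inf_lift0_alpha (h : IsN5 α β γ δ) : lift0 γ β ⊓ lift0 γ α = ker0 γ := by
  rw [← lift0_inf, disjoint_iff.mp h.disjoint_alpha_beta.symm, lift0_bot]

theorem lift1_beta_inf_lift0_alpha (h : IsN5 α β γ δ) : lift1 γ β ⊓ lift0 γ α = ker1 γ := by
  rw [lift0_eq_lift1 γ h.gamma_le_alpha, ← lift1_inf, disjoint_iff.mp h.disjoint_alpha_beta.symm,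
    lift1_bot]

theorem lift0_inf_lift1_inf_lift0_alpha (h : IsN5 α β γ δ) :
    lift0 γ β ⊓ lift1 γ β ⊓ lift0 γ α = ⊥ := by
  refine le_bot_iff.mp (le_trans ?_ (ker0_inf_lift0_inf_lift1_eq_bot γ h.disjoint_beta_gamma).le)
  rw [← h.lift0_beta_inf_lift0_alpha]
  exact le_inf (le_inf (inf_le_left.trans inf_le_left) inf_le_right) inf_le_left

theorem lift0_inf_lift1_inf_lift0_gamma (h : IsN5 α β γ δ) :
    lift0 γ β ⊓ lift1 γ β ⊓ lift0 γ γ = ⊥ :=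
  le_bot_iff.mp <| (inf_le_inf_left _ (lift0_mono γ h.gamma_le_alpha)).trans
    h.lift0_inf_lift1_inf_lift0_alpha.le

theorem lift0_delta_eq_sup_gamma (h : IsN5 α β γ δ) :
    lift0 γ δ = lift0 γ β ⊔ lift0 γ γ := by
  rw [← h.2.2.2.2.1, lift0_sup, sup_comm]

theorem lift0_delta_eq_ker_sup (h : IsN5 α β γ δ) :
    lift0 γ δ = ker0 γ ⊔ ker1 γ ⊔ (lift0 γ β ⊓ lift1 γ β) := by
  conv_lhs => rw [h.lift0_delta_eq_sup_gamma, lift0_self, ← ker0_sup_lift0_inf_lift1 γ β]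
  rw [sup_sup_sup_comm, sup_idem]
  ac_rfl

theorem lift0_inf_lift1_sup_lift0_gamma (h : IsN5 α β γ δ) :
    lift0 γ β ⊓ lift1 γ β ⊔ lift0 γ γ = lift0 γ δ := by
  rw [h.lift0_delta_eq_ker_sup, lift0_self, sup_comm]

theorem sup_eq_lift0_delta (h : IsN5 α β γ δ) {x y : Setoid (Dup γ)} (hx : x ≤ lift0 γ δ)
    (hy : y ≤ lift0 γ δ) (hμ : lift0 γ β ⊓ lift1 γ β ≤ x ⊔ y) (hγ : lift0 γ γ ≤ x ⊔ y) :
    x ⊔ y = lift0 γ δ :=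
  le_antisymm (sup_le hx hy) (h.lift0_inf_lift1_sup_lift0_gamma ▸ sup_le hμ hγ)

theorem ker0_sup_lift1_beta (h : IsN5 α β γ δ) : ker0 γ ⊔ lift1 γ β = lift0 γ δ := by
  refine h.sup_eq_lift0_delta (ker0_le_lift0 γ δ) h.lift1_beta_le_lift0_delta
    (le_sup_of_le_right inf_le_right) ?_
  rw [lift0_self]
  exact sup_le_sup_left (ker1_le_lift1 γ β) _

theorem ker1_sup_lift0_beta (h : IsN5 α β γ δ) : ker1 γ ⊔ lift0 γ β = lift0 γ δ := by
  refine h.sup_eq_lift0_delta (ker1_le_lift0 γ h.gamma_le_delta) (lift0_mono γ h.beta_le_delta)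
    (le_sup_of_le_right inf_le_left) ?_
  rw [lift0_self, sup_comm]
  exact sup_le_sup_left (ker0_le_lift0 γ β) _

theorem lift0_beta_sup_lift1_beta (h : IsN5 α β γ δ) : lift0 γ β ⊔ lift1 γ β = lift0 γ δ := by
  refine h.sup_eq_lift0_delta (lift0_mono γ h.beta_le_delta) h.lift1_beta_le_lift0_delta
    (inf_le_left.trans le_sup_left) ?_
  rw [lift0_self]
  exact sup_le_sup (ker0_le_lift0 γ β) (ker1_le_lift1 γ β)

theorem pairwise_le_or_inf_mem_l14List (h : IsN5 α β γ δ) :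
    (l14List α β γ δ).Pairwise fun x y => x ≤ y ∨ x ⊓ y ∈ l14List α β γ δ := by
  have hβγ := h.disjoint_beta_gamma
  simp [l14List, h.gamma_le_alpha, h.gamma_le_delta, h.alpha_le_delta, h.beta_le_delta,
    lift0_le_lift0_iff, ker0_le_lift0, ker1_le_lift1, ker1_le_lift0, inf_le_of_left_le,
    h.lift1_beta_le_lift0_delta, ker0_inf_ker1, ker0_inf_lift0_inf_lift1_eq_bot γ hβγ,
    ker0_inf_lift1_eq_bot γ hβγ, ker1_inf_lift0_inf_lift1_eq_bot γ hβγ, ker1_inf_lift0_eq_bot γ hβγ,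
    h.lift0_inf_lift1_inf_lift0_gamma, h.lift0_inf_lift1_inf_lift0_alpha,
    h.lift0_beta_inf_lift0_gamma, h.lift0_beta_inf_lift0_alpha,
    h.lift1_beta_inf_lift0_gamma, h.lift1_beta_inf_lift0_alpha]

theorem pairwise_le_or_sup_mem_l14List (h : IsN5 α β γ δ) :
    (l14List α β γ δ).Pairwise fun x y => x ≤ y ∨ x ⊔ y ∈ l14List α β γ δ := by
  simp [l14List, h.gamma_le_alpha, h.gamma_le_delta, h.alpha_le_delta, h.beta_le_delta,
    lift0_le_lift0_iff, ker0_le_lift0, ker1_le_lift1, ker1_le_lift0, inf_le_of_left_le,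
    h.lift1_beta_le_lift0_delta, ← lift0_self, ker0_sup_lift0_inf_lift1, ker1_sup_lift0_inf_lift1,
    h.sup_eq_lift0_delta, h.ker0_sup_lift1_beta, h.ker1_sup_lift0_beta,
    h.lift0_beta_sup_lift1_beta, le_sup_of_le_left, le_sup_of_le_right]

theorem pairwise_ne_l14List (h : IsN5 α β γ δ) : (l14List α β γ δ).Pairwise (· ≠ ·) := by
  obtain ⟨a, b, hab, hne : a ≠ b⟩ := Setoid.exists_rel_not_rel_of_not_le h.1.not_ge
  obtain ⟨c, d, hcd, hncd⟩ := Setoid.exists_rel_not_rel_of_not_le h.2.1.not_ge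
  obtain ⟨u, v, huv, hnuv : u ≠ v⟩ :=
    Setoid.exists_rel_not_rel_of_not_le (mt le_bot_iff.mp h.2.2.2.2.2.2.1)
  have hnβba : ¬ β b a := fun hβ =>
    hne (h.eq_of_rel_alpha_of_rel_beta (h.gamma_le_alpha hab) (β.symm' hβ))
  have hnγuv : ¬ γ u v := fun hγ => hnuv (h.eq_of_rel_alpha_of_rel_beta (h.gamma_le_alpha hγ) huv)
  have hnαuv : ¬ α u v := fun hα => hnuv (h.eq_of_rel_alpha_of_rel_beta hα huv)
  have hncd' : c ≠ d := fun e => hncd (e ▸ γ.refl' c)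
  have hnβcd : ¬ β c d := fun hβ => hncd' (h.eq_of_rel_alpha_of_rel_beta hcd hβ)
  refine List.Pairwise.of_map (S := (· ≠ ·)) (fun r : Setoid (Dup γ) =>
    (r (Dup.mk hab) (Dup.diag γ a), r (Dup.mk (γ.symm' hab)) (Dup.diag γ a),
    r (Dup.diag γ u) (Dup.diag γ v), r (Dup.diag γ c) (Dup.diag γ d)))
    (fun _ _ hrs e => hrs (e ▸ rfl)) ?_
  simp [l14List, Setoid.inf_iff_and, Dup.ext_iff, hne.symm, hnuv, hnβba, hnγuv, hnαuv, hncd, hncd',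
    hnβcd, huv, hcd, γ.symm' hab, h.gamma_le_alpha (γ.symm' hab), h.gamma_le_delta (γ.symm' hab),
    h.beta_le_delta huv, h.alpha_le_delta hcd]

end IsN5

/-- the lattice `L₁₄` inside `Setoid (A(γ))`, Figure 3. -/
theorem L14_sublattice (α β γ δ : Setoid A) (h : IsN5 α β γ δ) :
    lift0 γ γ = lift1 γ γ ∧
    lift0 γ γ = ker0 γ ⊔ ker1 γ ∧
    lift0 γ α = lift1 γ α ∧
    lift0 γ δ = lift1 γ δ ∧
    lift0 γ δ = lift0 γ β ⊔ lift0 γ γ ∧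
    lift0 γ δ = lift0 γ β ⊔ lift1 γ β ∧
    lift0 γ β = ker0 γ ⊔ (lift0 γ β ⊓ lift1 γ β) ∧
    lift1 γ β = ker1 γ ⊔ (lift0 γ β ⊓ lift1 γ β) ∧
    lift0 γ β ⊓ lift0 γ γ = ker0 γ ∧
    lift1 γ β ⊓ lift0 γ γ = ker1 γ ∧
    lift0 γ α ⊓ lift0 γ β = ker0 γ ∧
    (lift0 γ β ⊓ lift1 γ β) ⊓ ker0 γ = ⊥ ∧
    (lift0 γ β ⊓ lift1 γ β) ⊔ lift0 γ γ = lift0 γ δ ∧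
    [(⊥ : Setoid (Dup γ)), ker0 γ, ker1 γ, lift0 γ β ⊓ lift1 γ β,
      lift0 γ β, lift1 γ β, lift0 γ γ, lift0 γ α, lift0 γ δ].Pairwise (· ≠ ·) ∧
    (∀ x ∈ ({⊥, ker0 γ, ker1 γ, lift0 γ β ⊓ lift1 γ β,
        lift0 γ β, lift1 γ β, lift0 γ γ, lift0 γ α, lift0 γ δ} : Set (Setoid (Dup γ))),
      ∀ y ∈ ({⊥, ker0 γ, ker1 γ, lift0 γ β ⊓ lift1 γ β,
        lift0 γ β, lift1 γ β, lift0 γ γ, lift0 γ α, lift0 γ δ} : Set (Setoid (Dup γ))),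
      x ⊓ y ∈ ({⊥, ker0 γ, ker1 γ, lift0 γ β ⊓ lift1 γ β,
        lift0 γ β, lift1 γ β, lift0 γ γ, lift0 γ α, lift0 γ δ} : Set (Setoid (Dup γ))) ∧
      x ⊔ y ∈ ({⊥, ker0 γ, ker1 γ, lift0 γ β ⊓ lift1 γ β,
        lift0 γ β, lift1 γ β, lift0 γ γ, lift0 γ α, lift0 γ δ} : Set (Setoid (Dup γ)))) := by
  refine ⟨lift0_eq_lift1 γ le_rfl, lift0_self γ, lift0_eq_lift1 γ h.gamma_le_alpha,
    lift0_eq_lift1 γ h.gamma_le_delta, h.lift0_delta_eq_sup_gamma, h.lift0_beta_sup_lift1_beta.symm,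
    (ker0_sup_lift0_inf_lift1 γ β).symm, (ker1_sup_lift0_inf_lift1 γ β).symm,
    h.lift0_beta_inf_lift0_gamma, h.lift1_beta_inf_lift0_gamma,
    (inf_comm _ _).trans h.lift0_beta_inf_lift0_alpha,
    (inf_comm _ _).trans (ker0_inf_lift0_inf_lift1_eq_bot γ h.disjoint_beta_gamma),
    h.lift0_inf_lift1_sup_lift0_gamma, h.pairwise_ne_l14List, ?_⟩
  have := List.forall_inf_sup_mem_of_pairwise h.pairwise_le_or_inf_mem_l14List
    h.pairwise_le_or_sup_mem_l14List
  simpa only [l14List, List.mem_cons, List.not_mem_nil, or_false, Set.mem_insert_iff,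
    Set.mem_singleton_iff] using this
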